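/- arXiv:2311.16629 — 7 statements merged into one kernel-verified Lean document; each statement's English description precedes it below -/
import Mathlib

section
/- Let η ∈ ℂ and set (p₀, p₁, q₀, q₁, q₂, q₃, q₄) = (−46η⁶/3, −11η⁴, 812η⁹/27, 146η⁷/3, 34η⁵, 38η³/3, 2η). Then the surface f_{E₇} = 0 has singular points at the three points (−η², 4η³/3, 0), (−2η², −2η³/3, 0) and (−5η², 16η³/3, 0): at each of these points f_{E₇} and its three partial derivatives ∂f_{E₇}/∂x, ∂f_{E₇}/∂y, ∂f_{E₇}/∂z all vanish. -/
/-- The semi-universal deformation of the simple singularity of type E₇. -/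
def fE7 (p0 p1 q0 q1 q2 q3 q4 x y z : ℂ) : ℂ :=
  -z ^ 2 + y ^ 3 + y * (p0 + p1 * x + x ^ 3) + q0 + q1 * x + q2 * x ^ 2 +
    q3 * x ^ 3 + q4 * x ^ 4

/-- `∂f_{E₇}/∂x`. -/
def fE7_x (_p0 p1 _q0 q1 q2 q3 q4 x y _z : ℂ) : ℂ :=
  y * (p1 + 3 * x ^ 2) + q1 + 2 * q2 * x + 3 * q3 * x ^ 2 + 4 * q4 * x ^ 3

/-- `∂f_{E₇}/∂y`. -/
def fE7_y (p0 p1 _q0 _q1 _q2 _q3 _q4 x y _z : ℂ) : ℂ :=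
  3 * y ^ 2 + p0 + p1 * x + x ^ 3

/-- `∂f_{E₇}/∂z`. -/
def fE7_z (_p0 _p1 _q0 _q1 _q2 _q3 _q4 _x _y z : ℂ) : ℂ := -2 * z

/-- Case E₇(4): at the parameter λ⁽⁴⁾ the surface `f_{E₇} = 0` is singular at the three
points `(−η², 4η³/3, 0)`, `(−2η², −2η³/3, 0)`, `(−5η², 16η³/3, 0)`. -/
theorem fE7_case4_singular_points (η : ℂ) :
    (∀ P : ℂ × ℂ × ℂ,
      (P = (-η ^ 2, 4 * η ^ 3 / 3, 0) ∨ P = (-2 * η ^ 2, -2 * η ^ 3 / 3, 0) ∨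
        P = (-5 * η ^ 2, 16 * η ^ 3 / 3, 0)) →
      fE7 (-46 * η ^ 6 / 3) (-11 * η ^ 4) (812 * η ^ 9 / 27) (146 * η ^ 7 / 3)
          (34 * η ^ 5) (38 * η ^ 3 / 3) (2 * η) P.1 P.2.1 P.2.2 = 0 ∧
      fE7_x (-46 * η ^ 6 / 3) (-11 * η ^ 4) (812 * η ^ 9 / 27) (146 * η ^ 7 / 3)
          (34 * η ^ 5) (38 * η ^ 3 / 3) (2 * η) P.1 P.2.1 P.2.2 = 0 ∧
      fE7_y (-46 * η ^ 6 / 3) (-11 * η ^ 4) (812 * η ^ 9 / 27) (146 * η ^ 7 / 3)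
          (34 * η ^ 5) (38 * η ^ 3 / 3) (2 * η) P.1 P.2.1 P.2.2 = 0 ∧
      fE7_z (-46 * η ^ 6 / 3) (-11 * η ^ 4) (812 * η ^ 9 / 27) (146 * η ^ 7 / 3)
          (34 * η ^ 5) (38 * η ^ 3 / 3) (2 * η) P.1 P.2.1 P.2.2 = 0) := by
  rintro P (rfl | rfl | rfl) <;>
    refine ⟨?_, ?_, ?_, ?_⟩ <;>
    simp only [fE7, fE7_x, fE7_y, fE7_z] <;> ring
end

section
/- Let η ∈ ℂ and set (p₀, p₁, q₀, q₁, q₂, q₃, q₄) = (−100η⁶/3, −20η⁴, 3400η⁹/27, 520η⁷/3, 92η⁵, 70η³/3, 5η/2). Then the surface f_{E₇} = 0 has singular points at the two points (−2η², 2η³/3, 0) and (−10η², 50η³/3, 0): at each of these points f_{E₇} and its three partial derivatives ∂f_{E₇}/∂x, ∂f_{E₇}/∂y, ∂f_{E₇}/∂z all vanish. -/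
/-- Case E₇(5): at the parameter λ⁽⁵⁾ the surface `f_{E₇} = 0` is singular at the two
points `(−2η², 2η³/3, 0)` and `(−10η², 50η³/3, 0)`. -/
theorem fE7_case5_singular_points (η : ℂ) :
    (∀ P : ℂ × ℂ × ℂ,
      (P = (-2 * η ^ 2, 2 * η ^ 3 / 3, 0) ∨ P = (-10 * η ^ 2, 50 * η ^ 3 / 3, 0)) →
      fE7 (-100 * η ^ 6 / 3) (-20 * η ^ 4) (3400 * η ^ 9 / 27) (520 * η ^ 7 / 3)
          (92 * η ^ 5) (70 * η ^ 3 / 3) (5 * η / 2) P.1 P.2.1 P.2.2 = 0 ∧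
      fE7_x (-100 * η ^ 6 / 3) (-20 * η ^ 4) (3400 * η ^ 9 / 27) (520 * η ^ 7 / 3)
          (92 * η ^ 5) (70 * η ^ 3 / 3) (5 * η / 2) P.1 P.2.1 P.2.2 = 0 ∧
      fE7_y (-100 * η ^ 6 / 3) (-20 * η ^ 4) (3400 * η ^ 9 / 27) (520 * η ^ 7 / 3)
          (92 * η ^ 5) (70 * η ^ 3 / 3) (5 * η / 2) P.1 P.2.1 P.2.2 = 0 ∧
      fE7_z (-100 * η ^ 6 / 3) (-20 * η ^ 4) (3400 * η ^ 9 / 27) (520 * η ^ 7 / 3)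
          (92 * η ^ 5) (70 * η ^ 3 / 3) (5 * η / 2) P.1 P.2.1 P.2.2 = 0) := by
  rintro P (rfl | rfl) <;>
    refine ⟨?_, ?_, ?_, ?_⟩ <;> simp only [fE7, fE7_x, fE7_y, fE7_z] <;> ring
end

section
/- Let s₃, t₁, t₂, t₃, t₄, t₅, t₇ ∈ ℂ and define p₀ = (−9s₃² + 2t₂³ − 9t₂t₄)/27, p₁ = (−t₂² + 3t₄)/3, q₀ = (6s₃³ − 2s₃t₂³ + t₁t₂⁴ − 3t₂³t₃ + 9s₃t₂t₄ + 9t₂²t₅ − 27t₂t₇)/81, q₁ = (3s₃t₂² − 4t₁t₂³ + 9t₂²t₃ − 9s₃t₄ − 18t₂t₅ + 27t₇)/27, q₂ = (2t₁t₂² − 3t₂t₃ + 3t₅)/3, q₃ = (−s₃ − 4t₁t₂ + 3t₃)/3, q₄ = t₁. Then for all x₁, y₁, z ∈ ℂ one has f̃_{(s₃,τ)}(x₁ − t₂/3, y₁ − s₃/3, z) = f_{E₇}(x₁, y₁, z). -/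
/-- The family `f̃_{(s₃,τ)}(x,y,z)` of deformations of the simple singularity of type E₇. -/
def ftilde (s3 t1 t2 t3 t4 t5 t7 x y z : ℂ) : ℂ :=
  y ^ 3 + x ^ 3 * y + t7 * x + t5 * x ^ 2 + t3 * x ^ 3 + t1 * x ^ 4 +
    y * (t4 * x + t2 * x ^ 2) + s3 * y ^ 2 - z ^ 2

/-- With the stated expressions of (p₀,p₁,q₀,…,q₄) in terms of (s₃,t₁,…,t₅,t₇),
the shift `x = x₁ − t₂/3`, `y = y₁ − s₃/3` carries `f̃_{(s₃,τ)}` to `f_{E₇}`. -/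
theorem ftilde_shift_eq_fE7 (s3 t1 t2 t3 t4 t5 t7 p0 p1 q0 q1 q2 q3 q4 : ℂ)
    (hp0 : p0 = (-9 * s3 ^ 2 + 2 * t2 ^ 3 - 9 * t2 * t4) / 27)
    (hp1 : p1 = (-t2 ^ 2 + 3 * t4) / 3)
    (hq0 : q0 = (6 * s3 ^ 3 - 2 * s3 * t2 ^ 3 + t1 * t2 ^ 4 - 3 * t2 ^ 3 * t3 +
      9 * s3 * t2 * t4 + 9 * t2 ^ 2 * t5 - 27 * t2 * t7) / 81)
    (hq1 : q1 = (3 * s3 * t2 ^ 2 - 4 * t1 * t2 ^ 3 + 9 * t2 ^ 2 * t3 - 9 * s3 * t4 -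
      18 * t2 * t5 + 27 * t7) / 27)
    (hq2 : q2 = (2 * t1 * t2 ^ 2 - 3 * t2 * t3 + 3 * t5) / 3)
    (hq3 : q3 = (-s3 - 4 * t1 * t2 + 3 * t3) / 3)
    (hq4 : q4 = t1) :
    ∀ x1 y1 z : ℂ,
      ftilde s3 t1 t2 t3 t4 t5 t7 (x1 - t2 / 3) (y1 - s3 / 3) z =
        fE7 p0 p1 q0 q1 q2 q3 q4 x1 y1 z := by
  intro x1 y1 z
  subst hp0 hp1 hq0 hq1 hq2 hq3 hq4
  simp only [ftilde, fE7]
  ring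
end

section
/- For every (p₀, p₁, q₀, q₁, q₂, q₃, q₄) ∈ ℂ⁷ there exists (s₃, t₁, t₂, t₃, t₄, t₅, t₇) ∈ ℂ⁷ satisfying the seven equations: p₀ = (−9s₃² + 2t₂³ − 9t₂t₄)/27, p₁ = (−t₂² + 3t₄)/3, q₀ = (6s₃³ − 2s₃t₂³ + t₁t₂⁴ − 3t₂³t₃ + 9s₃t₂t₄ + 9t₂²t₅ − 27t₂t₇)/81, q₁ = (3s₃t₂² − 4t₁t₂³ + 9t₂²t₃ − 9s₃t₄ − 18t₂t₅ + 27t₇)/27, q₂ = (2t₁t₂² − 3t₂t₃ + 3t₅)/3, q₃ = (−s₃ − 4t₁t₂ + 3t₃)/3, q₄ = t₁. -/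
open Polynomial

/-- In `ℂ`, if `4S³ = 81A²` then there is `s` with `9s² = S` and `6s³ = A`. -/
lemma aux_sqcube (S A : ℂ) (h : 4 * S ^ 3 = 81 * A ^ 2) :
    ∃ s : ℂ, 9 * s ^ 2 = S ∧ 6 * s ^ 3 = A := by
  by_cases hS : S = 0
  · have hA : A = 0 := by
      have h2 : A ^ 2 = 0 := by subst hS; linear_combination (-1/81 : ℂ) * h
      exact pow_eq_zero_iff two_ne_zero |>.mp h2
    exact ⟨0, by simp [hS], by simp [hA]⟩
  · have h2S : (2 : ℂ) * S ≠ 0 := by simpa using hS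
    refine ⟨3 * A / (2 * S), ?_, ?_⟩
    · rw [div_pow, mul_div_assoc', div_eq_iff (pow_ne_zero 2 h2S)]
      linear_combination -h
    · rw [div_pow, mul_div_assoc', div_eq_iff (pow_ne_zero 3 h2S)]
      linear_combination (-2 * A) * h

/-- The compatibility equation `4S'(z)³ = 81A(z)²` has a complex root, being a
degree-9 polynomial equation. -/
lemma aux_root (p0 p1 q0 q1 q2 q3 q4 : ℂ) :
    ∃ z : ℂ, 4 * (-z ^ 3 - 9 * p1 * z - 27 * p0) ^ 3 =
      81 * (q4 * z ^ 4 + 3 * q3 * z ^ 3 + 9 * q2 * z ^ 2 + 27 * q1 * z + 81 * q0) ^ 2 := by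
  let P : Polynomial ℂ :=
    C (-531441 * q0 ^ 2 - 78732 * p0 ^ 3) +
    C (-354294 * q0 * q1 - 78732 * p0 ^ 2 * p1) * X +
    C (-59049 * q1 ^ 2 - 118098 * q0 * q2 - 26244 * p0 * p1 ^ 2) * X ^ 2 +
    C (-39366 * q1 * q2 - 39366 * q0 * q3 - 2916 * p1 ^ 3 - 8748 * p0 ^ 2) * X ^ 3 +
    C (-6561 * q2 ^ 2 - 13122 * q1 * q3 - 13122 * q0 * q4 - 5832 * p0 * p1) * X ^ 4 +
    C (-4374 * q2 * q3 - 4374 * q1 * q4 - 972 * p1 ^ 2) * X ^ 5 +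
    C (-729 * q3 ^ 2 - 1458 * q2 * q4 - 324 * p0) * X ^ 6 +
    C (-486 * q3 * q4 - 108 * p1) * X ^ 7 +
    C (-81 * q4 ^ 2) * X ^ 8 +
    C (-4) * X ^ 9
  have hdeg : P.degree = 9 := by
    unfold P
    compute_degree!
  obtain ⟨z, hz⟩ := Complex.exists_root (f := P) (by rw [hdeg]; norm_num)
  have hz' : P.eval z = 0 := hz
  simp only [P, eval_add, eval_mul, eval_C, eval_pow, eval_X] at hz'
  exact ⟨z, by linear_combination hz'⟩

/-- For every (p₀,p₁,q₀,q₁,q₂,q₃,q₄) ∈ ℂ⁷ there exists (s₃,t₁,t₂,t₃,t₄,t₅,t₇) ∈ ℂ⁷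
solving the system expressing the E₇ deformation parameters through the parameters
of the family `f̃`. -/
theorem exists_param_solution (p0 p1 q0 q1 q2 q3 q4 : ℂ) :
    ∃ s3 t1 t2 t3 t4 t5 t7 : ℂ,
      p0 = (-9 * s3 ^ 2 + 2 * t2 ^ 3 - 9 * t2 * t4) / 27 ∧
      p1 = (-t2 ^ 2 + 3 * t4) / 3 ∧
      q0 = (6 * s3 ^ 3 - 2 * s3 * t2 ^ 3 + t1 * t2 ^ 4 - 3 * t2 ^ 3 * t3 +
        9 * s3 * t2 * t4 + 9 * t2 ^ 2 * t5 - 27 * t2 * t7) / 81 ∧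
      q1 = (3 * s3 * t2 ^ 2 - 4 * t1 * t2 ^ 3 + 9 * t2 ^ 2 * t3 - 9 * s3 * t4 -
        18 * t2 * t5 + 27 * t7) / 27 ∧
      q2 = (2 * t1 * t2 ^ 2 - 3 * t2 * t3 + 3 * t5) / 3 ∧
      q3 = (-s3 - 4 * t1 * t2 + 3 * t3) / 3 ∧
      q4 = t1 := by
  obtain ⟨z, hkey⟩ := aux_root p0 p1 q0 q1 q2 q3 q4
  obtain ⟨s3, h1, h2⟩ := aux_sqcube _ _ hkey
  refine ⟨s3, q4, z, q3 + s3 / 3 + 4 * q4 * z / 3, p1 + z ^ 2 / 3,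
    (3 * q2 - 2 * q4 * z ^ 2 + 3 * z * (q3 + s3 / 3 + 4 * q4 * z / 3)) / 3,
    (27 * q1 - 3 * s3 * z ^ 2 + 4 * q4 * z ^ 3 -
      9 * z ^ 2 * (q3 + s3 / 3 + 4 * q4 * z / 3) + 9 * s3 * (p1 + z ^ 2 / 3) +
      18 * z * ((3 * q2 - 2 * q4 * z ^ 2 + 3 * z * (q3 + s3 / 3 + 4 * q4 * z / 3)) / 3)) / 27,
    ?_, by ring, ?_, by ring, by ring, by ring, rfl⟩
  · linear_combination (1/27 : ℂ) * h1
  · linear_combination (-1/81 : ℂ) * h2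
end

section
/- Let (p₀, p₁, q₀, q₁, q₂, q₃, q₄) ∈ ℂ⁷ and suppose (s₃, t₂) ∈ ℂ² satisfies the two equations −81q₀ + 6s₃³ − 27q₁t₂ − 9q₂t₂² − 3q₃t₂³ − q₄t₂⁴ = 0 and 27p₀ + 9s₃² + 9p₁t₂ + t₂³ = 0. Define t₁ = q₄, t₄ = (3p₁ + t₂²)/3, t₃ = (3q₃ + s₃ + 4q₄t₂)/3, t₅ = (3q₂ + 3q₃t₂ + s₃t₂ + 2q₄t₂²)/3 and t₇ = (27q₁ + 9p₁s₃ + 18q₂t₂ + 9q₃t₂² + 3s₃t₂² + 4q₄t₂³)/27. Then the seven equations p₀ = (−9s₃² + 2t₂³ − 9t₂t₄)/27, p₁ = (−t₂² + 3t₄)/3, q₀ = (6s₃³ − 2s₃t₂³ + t₁t₂⁴ − 3t₂³t₃ + 9s₃t₂t₄ + 9t₂²t₅ − 27t₂t₇)/81, q₁ = (3s₃t₂² − 4t₁t₂³ + 9t₂²t₃ − 9s₃t₄ − 18t₂t₅ + 27t₇)/27, q₂ = (2t₁t₂² − 3t₂t₃ + 3t₅)/3, q₃ = (−s₃ − 4t₁t₂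 + 3t₃)/3, q₄ = t₁ all hold. -/
/-- Given a solution (s₃,t₂) of the two key algebraic equations, the remaining parameters
t₁, t₃, t₄, t₅, t₇ defined by the stated formulas solve the whole system expressing
(p₀,p₁,q₀,…,q₄) through (s₃,t₁,…,t₅,t₇). -/
theorem param_recipe_solves_system (p0 p1 q0 q1 q2 q3 q4 s3 t1 t2 t3 t4 t5 t7 : ℂ)
    (h1 : -81 * q0 + 6 * s3 ^ 3 - 27 * q1 * t2 - 9 * q2 * t2 ^ 2 - 3 * q3 * t2 ^ 3 -
      q4 * t2 ^ 4 = 0)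
    (h2 : 27 * p0 + 9 * s3 ^ 2 + 9 * p1 * t2 + t2 ^ 3 = 0)
    (ht1 : t1 = q4)
    (ht4 : t4 = (3 * p1 + t2 ^ 2) / 3)
    (ht3 : t3 = (3 * q3 + s3 + 4 * q4 * t2) / 3)
    (ht5 : t5 = (3 * q2 + 3 * q3 * t2 + s3 * t2 + 2 * q4 * t2 ^ 2) / 3)
    (ht7 : t7 = (27 * q1 + 9 * p1 * s3 + 18 * q2 * t2 + 9 * q3 * t2 ^ 2 +
      3 * s3 * t2 ^ 2 + 4 * q4 * t2 ^ 3) / 27) :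
    p0 = (-9 * s3 ^ 2 + 2 * t2 ^ 3 - 9 * t2 * t4) / 27 ∧
    p1 = (-t2 ^ 2 + 3 * t4) / 3 ∧
    q0 = (6 * s3 ^ 3 - 2 * s3 * t2 ^ 3 + t1 * t2 ^ 4 - 3 * t2 ^ 3 * t3 +
      9 * s3 * t2 * t4 + 9 * t2 ^ 2 * t5 - 27 * t2 * t7) / 81 ∧
    q1 = (3 * s3 * t2 ^ 2 - 4 * t1 * t2 ^ 3 + 9 * t2 ^ 2 * t3 - 9 * s3 * t4 -
      18 * t2 * t5 + 27 * t7) / 27 ∧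
    q2 = (2 * t1 * t2 ^ 2 - 3 * t2 * t3 + 3 * t5) / 3 ∧
    q3 = (-s3 - 4 * t1 * t2 + 3 * t3) / 3 ∧
    q4 = t1 := by
  subst ht1 ht4 ht3 ht5 ht7
  refine ⟨by linear_combination h2 / 27, by ring, by linear_combination -h1 / 81, ?_, by ring, by ring, rfl⟩
  ring
end

section
/- Let τ = (t₁, t₂, t₃, t₄, t₅, 0) ∈ ℂ⁶ (so t₇ = 0) with t₅ ≠ 0 and t₄ ≠ 0, and consider f_τ(x,y,z) = y³ + x³y + t₅x² + t₃x³ + t₁x⁴ + y(t₄x + t₂x²) − z². Then there exist polynomials ψ₁, ψ₂ ∈ ℂ[u, y] with ψ₁(0,0) ≠ 0 and ψ₂(0,0) ≠ 0 such that, writing x₁ = x + (t₄/(2t₅))y, one has f_τ(x,y,z) = x₁²·ψ₁(x₁, y) + y²·ψ₂(x₁, y) − z². (Consequently the surface f_τ = 0 has a simple singularity of type A₁ at the origin.) -/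
open MvPolynomial

/-- The family `f_τ(x,y,z) = f̃_{(0,τ)}(x,y,z)`. -/
def fF (t1 t2 t3 t4 t5 t7 x y z : ℂ) : ℂ :=
  y ^ 3 + x ^ 3 * y + t7 * x + t5 * x ^ 2 + t3 * x ^ 3 + t1 * x ^ 4 +
    y * (t4 * x + t2 * x ^ 2) - z ^ 2

/-- For `t₇ = 0`, `t₅ ≠ 0`, `t₄ ≠ 0`, writing `x₁ = x + (t₄/(2t₅))y` one has
`f_τ = x₁²ψ₁(x₁,y) + y²ψ₂(x₁,y) − z²` with `ψ₁(0,0) ≠ 0`, `ψ₂(0,0) ≠ 0`;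
hence `f_τ = 0` has a simple singularity of type A₁ at the origin. -/
theorem fF_t7_zero_t5_ne_zero_A1 (t1 t2 t3 t4 t5 : ℂ) (ht5 : t5 ≠ 0) (ht4 : t4 ≠ 0) :
    ∃ ψ1 ψ2 : MvPolynomial (Fin 2) ℂ,
      eval (fun _ => (0 : ℂ)) ψ1 ≠ 0 ∧ eval (fun _ => (0 : ℂ)) ψ2 ≠ 0 ∧
      ∀ x y z : ℂ,
        fF t1 t2 t3 t4 t5 0 x y z =
          (x + t4 / (2 * t5) * y) ^ 2 * eval ![x + t4 / (2 * t5) * y, y] ψ1 +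
            y ^ 2 * eval ![x + t4 / (2 * t5) * y, y] ψ2 - z ^ 2 := by
  set c : ℂ := t4 / (2 * t5) with hc
  refine ⟨C t5 + X 0 * X 1 - C (3*c) * X 1^2 + C t3 * X 0 - C (3*c*t3) * X 1
      + C t1 * X 0^2 - C (4*c*t1) * X 0 * X 1 + C (6*c^2*t1) * X 1^2 + C t2 * X 1,
    C (-(t4^2/(4*t5))) + X 1 + C (3*c^2) * X 0 * X 1 - C (c^3) * X 1^2
      + C (3*c^2*t3) * X 0 - C (c^3*t3) * X 1 - C (4*c^3*t1) * X 0 * X 1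
      + C (c^4*t1) * X 1^2 - C (2*c*t2) * X 0 + C (c^2*t2) * X 1, ?_, ?_, ?_⟩
  · simpa using ht5
  · simp [ht4, ht5]
  · intro x y z
    simp only [map_add, map_sub, map_mul, map_pow, eval_C, eval_X,
      Matrix.cons_val_zero, Matrix.cons_val_one, Matrix.head_cons]
    have h4 : t4 = 2 * t5 * c := by
      rw [hc]; field_simp
    have h5 : t4 ^ 2 / (4 * t5) = t5 * c ^ 2 := by
      rw [h4]; field_simp; ring
    rw [fF, h5, h4]
    ring
end

section
/- Let τ = (t₁, t₂, t₃, t₄, 0, 0) ∈ ℂ⁶ (so t₅ = t₇ = 0) with t₄ ≠ 0, and consider f_τ(x,y,z) = y³ + x³y + t₃x³ + t₁x⁴ + y(t₄x + t₂x²) − z². Then there exist polynomials ψ₃, ψ₄ ∈ ℂ[u, v] with ψ₃(0,0) ≠ 0 and ψ₄(0,0) ≠ 0 such that, writing x₁ = x + y and y₁ = x − y, one has f_τ(x,y,z) = x₁²·ψ₃(x₁, y₁) + y₁²·ψ₄(x₁, y₁) − z². (Consequently the surface f_τ = 0 has a simple singularity of type A₁ at the origin.) -/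
open MvPolynomial

/-- For `t₅ = t₇ = 0` and `t₄ ≠ 0`, writing `x₁ = x + y`, `y₁ = x − y` one has
`f_τ = x₁²ψ₃(x₁,y₁) + y₁²ψ₄(x₁,y₁) − z²` with `ψ₃(0,0) ≠ 0`, `ψ₄(0,0) ≠ 0`;
hence `f_τ = 0` has a simple singularity of type A₁ at the origin. -/
theorem fF_t5_t7_zero_A1 (t1 t2 t3 t4 : ℂ) (ht4 : t4 ≠ 0) :
    ∃ ψ3 ψ4 : MvPolynomial (Fin 2) ℂ,
      eval (fun _ => (0 : ℂ)) ψ3 ≠ 0 ∧ eval (fun _ => (0 : ℂ)) ψ4 ≠ 0 ∧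
      ∀ x y z : ℂ,
        fF t1 t2 t3 t4 0 0 x y z =
          (x + y) ^ 2 * eval ![x + y, x - y] ψ3 +
            (x - y) ^ 2 * eval ![x + y, x - y] ψ4 - z ^ 2 := by
  refine ⟨C (t4/4) + C ((-3+3*t3+t2)/8) * X 1 + C (3*t1/8) * X 1 ^ 2
      + C ((1+t3+t2)/8) * X 0 + C ((1+2*t1)/8) * X 0 * X 1 + C ((1+t1)/16) * X 0 ^ 2,
    C (-t4/4) + C ((-1+t3-t2)/8) * X 1 + C ((-1+t1)/16) * X 1 ^ 2
      + C ((3+3*t3-t2)/8) * X 0 + C ((-1+2*t1)/8) * X 0 * X 1, ?_, ?_, ?_⟩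
  · simp only [map_add, map_mul, map_pow, eval_C, eval_X]
    norm_num
    exact ht4
  · simp only [map_add, map_mul, map_pow, eval_C, eval_X]
    norm_num
    exact ht4
  · intro x y z
    simp only [map_add, map_mul, map_pow, eval_C, eval_X, Matrix.cons_val_zero,
      Matrix.cons_val_one, Matrix.head_cons, fF]
    ring
end
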